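/- For every integer n ≥ 1, the generalized quaternion (dicyclic) group Q_{8n} of order 8n, i.e. the group with presentation ⟨x, y ∣ x² = (xy)² = y^{2n}⟩ (equivalently, Mathlib's QuaternionGroup (2n)), has Grossman's Property A: every class-preserving automorphism of Q_{8n} is inner. -/

import Mathlib

/-!
Conjugating a class-preserving automorphism `φ` by a suitable element, we may assume that it
fixes the generator `x = a 1`. Its centraliser contains the whole cyclic subgroup `⟨a 1⟩`,
which already acts transitively on the conjugacy class `{xa (2s)}` of the other generator
`y = xa 0`; so a further conjugation by an element commuting with `x` makes `φ` fix `y` too,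
and an automorphism fixing a generating set is the identity.
-/

/-- A group `G` has Grossman's Property A if every class-preserving automorphism
(i.e. one sending each element to a conjugate of itself) is inner. -/
def HasPropertyA (G : Type*) [Group G] : Prop :=
  ∀ φ : G ≃* G, (∀ g : G, IsConj g (φ g)) → ∃ h : G, ∀ g : G, φ g = h * g * h⁻¹

theorem hasPropertyA_of_closure_pair_eq_top {G : Type*} [Group G] {x y : G}
    (hgen : Subgroup.closure {x, y} = ⊤)
    (hy : ∀ g, IsConj y g → ∃ c, Commute c x ∧ c * g * c⁻¹ = y) : HasPropertyA G := by
  intro φ hφ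
  obtain ⟨e, he⟩ := isConj_iff.mp (hφ x)
  have hφy : IsConj y (e⁻¹ * φ y * e⁻¹⁻¹) :=
    (hφ y).trans (isConj_iff.mpr ⟨e⁻¹, rfl⟩)
  obtain ⟨c, hcx, hc⟩ := hy _ hφy
  set χ : MulAut G := MulAut.conj (c * e⁻¹) * φ
  have hχ : ∀ g, χ g = c * (e⁻¹ * φ g * e⁻¹⁻¹) * c⁻¹ := fun g => by
    change c * e⁻¹ * φ g * (c * e⁻¹)⁻¹ = _
    group
  have hχ_one : χ = 1 := by
    refine MulEquiv.toMonoidHom_injective (MonoidHom.eq_of_eqOn_dense hgen ?_)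
    rintro g (hg | hg)
    · rw [hg]
      change χ x = x
      rw [hχ, ← he, show e⁻¹ * (e * x * e⁻¹) * e⁻¹⁻¹ = x by group, hcx.eq,
        mul_inv_cancel_right]
    · rw [Set.mem_singleton_iff.mp hg]
      exact (hχ y).trans hc
  refine ⟨e * c⁻¹, fun g => ?_⟩
  have hg : c * (e⁻¹ * φ g * e⁻¹⁻¹) * c⁻¹ = g := by rw [← hχ, hχ_one]; rfl
  conv_rhs => rw [← hg]
  group

namespace QuaternionGroup

variable {n : ℕ}

theorem inv_a (i : ZMod (2 * n)) : (a i : QuaternionGroup n)⁻¹ = a (-i) := rfl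

theorem inv_xa (i : ZMod (2 * n)) :
    (xa i : QuaternionGroup n)⁻¹ = xa ((n : ZMod (2 * n)) + i) :=
  rfl

theorem a_intCast (k : ℤ) : (a k : QuaternionGroup n) = a 1 ^ k := by
  cases k with
  | ofNat k => simp [a_one_pow]
  | negSucc k =>
    rw [zpow_negSucc, a_one_pow, Int.negSucc_eq]
    push_cast
    rfl

theorem closure_a_one_xa_zero :
    Subgroup.closure {a 1, xa 0} = (⊤ : Subgroup (QuaternionGroup n)) := by
  have ha : ∀ i : ZMod (2 * n), a i ∈ Subgroup.closure {a 1, xa 0} := fun i => by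
    rw [← ZMod.intCast_zmod_cast i, a_intCast]
    exact zpow_mem (Subgroup.subset_closure (by simp)) _
  rw [Subgroup.eq_top_iff']
  rintro (i | i)
  · exact ha i
  · rw [← zero_add i, ← xa_mul_a]
    exact mul_mem (Subgroup.subset_closure (by simp)) (ha i)

theorem commute_a (i j : ZMod (2 * n)) : Commute (a i) (a j) := by
  simp only [Commute, SemiconjBy, a_mul_a, add_comm]

theorem exists_commute_a_one_conj_eq_xa_zero {g : QuaternionGroup n} (h : IsConj (xa 0) g) :
    ∃ c, Commute c (a 1) ∧ c * g * c⁻¹ = xa 0 := by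
  obtain ⟨d, rfl⟩ := isConj_iff.mp h
  rcases d with j | j
  · refine ⟨a (-j), commute_a _ _, ?_⟩
    simp only [inv_a, a_mul_xa, xa_mul_a]
    congr 1
    ring
  · refine ⟨a j, commute_a _ _, ?_⟩
    simp only [inv_a, inv_xa, a_mul_xa, xa_mul_a, xa_mul_xa]
    congr 1
    ring

theorem hasPropertyA : HasPropertyA (QuaternionGroup n) :=
  hasPropertyA_of_closure_pair_eq_top closure_a_one_xa_zero
    fun _ => exists_commute_a_one_conj_eq_xa_zero

end QuaternionGroup

theorem quaternionGroup_propertyA : ∀ n : ℕ, 1 ≤ n →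
    HasPropertyA (QuaternionGroup (2 * n)) :=
  fun _ _ => QuaternionGroup.hasPropertyA
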